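/- Corollary 1 (bias reduction of CHIPS over IPS). Assume Assumption A3 (reward homogeneity, with cluster-level mean reward q̄) and q̄ a c ≥ 0 for all a, c. Then |Bias(ω_IPS)| − |Bias(ω_CHIPS)| = Σ_c p(c) · Σ_x p(x|c) · Σ_{a : π₀ x a = 0 and p(a|c,π₀) > 0} π x a · q̄ a c, where ω_IPS(x,c,a) = w(a,x) and ω_CHIPS(x,c,a) = w(a,c). In particular this difference is nonnegative. -/

import Mathlib

/-! Both biases are minus the value of `π` on the actions its weight cannot see: IPS loses the mass
`pX x * pC x c * π x a * q̄ a c` wherever `π₀ x a = 0`, CHIPS only where `p(a|c,π₀) = 0`, since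
under reward homogeneity the cluster weight recovers the value of every action the cluster supports.
Both losses are nonnegative, so the difference of absolute biases is the difference of losses. If
`p(a|c,π₀) = 0` then `π₀ x a = 0` for every `x` with `pX x * pC x c > 0`, so the CHIPS loss is part of
the IPS loss, and what remains is the loss on actions unsupported at `x` but supported in its
cluster. -/

open Finset

namespace OPE

noncomputable section

variable {X C A : Type*} [Fintype X] [Fintype C] [Fintype A]
  [Nonempty X] [Nonempty C] [Nonempty A]

/-- Cluster marginal `p(c) = Σ_x pX x * pC x c`. -/
def pc (pX : X → ℝ) (pC : X → C → ℝ) (c : C) : ℝ :=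
  ∑ x, pX x * pC x c

/-- Conditional context distribution `p(x|c)` (zero when `p(c) = 0`). -/
def pxc (pX : X → ℝ) (pC : X → C → ℝ) (x : X) (c : C) : ℝ :=
  pX x * pC x c / pc pX pC c

/-- `p(a|c,ρ) = Σ_x p(x|c) * ρ x a`. -/
def pac (pX : X → ℝ) (pC : X → C → ℝ) (ρ : X → A → ℝ) (c : C) (a : A) : ℝ :=
  ∑ x, pxc pX pC x c * ρ x a

/-- IPS weight `w(a,x) = π x a / π₀ x a` (with the convention `t/0 = 0`). -/
def wIPS (π π₀ : X → A → ℝ) (a : A) (x : X) : ℝ := π x a / π₀ x a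

/-- CHIPS weight `w(a,c) = p(a|c,π) / p(a|c,π₀)` (with the convention `t/0 = 0`). -/
def wCHIPS (pX : X → ℝ) (pC : X → C → ℝ) (π π₀ : X → A → ℝ) (a : A) (c : C) : ℝ :=
  pac pX pC π c a / pac pX pC π₀ c a

/-- Policy value `V(π)`. -/
def V (pX : X → ℝ) (pC : X → C → ℝ) (π : X → A → ℝ) (q : A → C → X → ℝ) : ℝ :=
  ∑ x, ∑ c, ∑ a, pX x * pC x c * π x a * q a c x

/-- Single-sample mean of a weighted estimator under the logging distribution. -/
def mu (pX : X → ℝ) (pC : X → C → ℝ) (π₀ : X → A → ℝ) (q : A → C → X → ℝ)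
    (ω : X → C → A → ℝ) : ℝ :=
  ∑ x, ∑ c, ∑ a, (pX x * pC x c * π₀ x a) * ω x c a * q a c x

/-- Bias of a weighted estimator. -/
def bias (pX : X → ℝ) (pC : X → C → ℝ) (π π₀ : X → A → ℝ) (q : A → C → X → ℝ)
    (ω : X → C → A → ℝ) : ℝ :=
  mu pX pC π₀ q ω - V pX pC π q

/-- Single-sample variance of a weighted estimator. -/
def varW (pX : X → ℝ) (pC : X → C → ℝ) (π₀ : X → A → ℝ) (q m2 : A → C → X → ℝ)
    (ω : X → C → A → ℝ) : ℝ :=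
  (∑ x, ∑ c, ∑ a, (pX x * pC x c * π₀ x a) * ω x c a ^ 2 * m2 a c x)
    - (mu pX pC π₀ q ω) ^ 2

/-- Single-sample mean squared error of a weighted estimator. -/
def mseW (pX : X → ℝ) (pC : X → C → ℝ) (π π₀ : X → A → ℝ) (q m2 : A → C → X → ℝ)
    (ω : X → C → A → ℝ) : ℝ :=
  (∑ x, ∑ c, ∑ a, (pX x * pC x c * π₀ x a) * ω x c a ^ 2 * m2 a c x)
    - 2 * V pX pC π q * mu pX pC π₀ q ω + (V pX pC π q) ^ 2


section

omit [Nonempty X] [Nonempty C] [Nonempty A]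

section Marginals

omit [Fintype C] [Fintype A]

variable {pX : X → ℝ} {pC : X → C → ℝ}

theorem pc_nonneg (hpX : ∀ x, 0 ≤ pX x) (hpC : ∀ x c, 0 ≤ pC x c) (c : C) :
    0 ≤ pc pX pC c :=
  sum_nonneg fun x _ => mul_nonneg (hpX x) (hpC x c)

theorem pxc_nonneg (hpX : ∀ x, 0 ≤ pX x) (hpC : ∀ x c, 0 ≤ pC x c) (x : X) (c : C) :
    0 ≤ pxc pX pC x c :=
  div_nonneg (mul_nonneg (hpX x) (hpC x c)) (pc_nonneg hpX hpC c)

theorem pac_nonneg (hpX : ∀ x, 0 ≤ pX x) (hpC : ∀ x c, 0 ≤ pC x c) {ρ : X → A → ℝ}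
    (hρ : ∀ x a, 0 ≤ ρ x a) (c : C) (a : A) :
    0 ≤ pac pX pC ρ c a :=
  sum_nonneg fun x _ => mul_nonneg (pxc_nonneg hpX hpC x c) (hρ x a)

/-- The junk value `p(x|c) = 0` for `p(c) = 0` is harmless: then every `pX x * pC x c` vanishes. -/
theorem pc_mul_pxc (hpX : ∀ x, 0 ≤ pX x) (hpC : ∀ x c, 0 ≤ pC x c) (x : X) (c : C) :
    pc pX pC c * pxc pX pC x c = pX x * pC x c := by
  by_cases h : pc pX pC c = 0
  · have hx := (sum_eq_zero_iff_of_nonneg fun x _ => mul_nonneg (hpX x) (hpC x c)).mp h x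
      (mem_univ x)
    rw [h, zero_mul, hx]
  · exact mul_div_cancel₀ _ h

theorem pc_mul_pac (hpX : ∀ x, 0 ≤ pX x) (hpC : ∀ x c, 0 ≤ pC x c) (ρ : X → A → ℝ)
    (c : C) (a : A) :
    pc pX pC c * pac pX pC ρ c a = ∑ x, pX x * pC x c * ρ x a := by
  simp only [pac, mul_sum, ← mul_assoc, pc_mul_pxc hpX hpC]

theorem mul_eq_zero_of_pac_eq_zero (hpX : ∀ x, 0 ≤ pX x) (hpC : ∀ x c, 0 ≤ pC x c)
    {ρ : X → A → ℝ} (hρ : ∀ x a, 0 ≤ ρ x a) {c : C} {a : A} (h : pac pX pC ρ c a = 0)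
    (x : X) : pX x * pC x c * ρ x a = 0 := by
  have hsum : ∑ x, pX x * pC x c * ρ x a = 0 := by rw [← pc_mul_pac hpX hpC, h, mul_zero]
  exact (sum_eq_zero_iff_of_nonneg fun x _ =>
    mul_nonneg (mul_nonneg (hpX x) (hpC x c)) (hρ x a)).mp hsum x (mem_univ x)

end Marginals

theorem sum_pc_mul_sum_pxc_mul {pX : X → ℝ} {pC : X → C → ℝ} (hpX : ∀ x, 0 ≤ pX x)
    (hpC : ∀ x c, 0 ≤ pC x c) (g : X → C → ℝ) :
    ∑ c, pc pX pC c * ∑ x, pxc pX pC x c * g x c = ∑ x, ∑ c, pX x * pC x c * g x c := by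
  simp only [mul_sum, ← mul_assoc, pc_mul_pxc hpX hpC]
  exact sum_comm

theorem sum_comm₃ (f : X → C → A → ℝ) :
    ∑ x, ∑ c, ∑ a, f x c a = ∑ c, ∑ a, ∑ x, f x c a := by
  rw [sum_comm]
  exact sum_congr rfl fun c _ => sum_comm

theorem sum_sum_sum_ite_nonneg {m : X → C → A → ℝ} (hm : ∀ x c a, 0 ≤ m x c a)
    (p : X → C → A → Prop) [∀ x c a, Decidable (p x c a)] :
    0 ≤ ∑ x, ∑ c, ∑ a, if p x c a then m x c a else 0 :=
  sum_nonneg fun x _ => sum_nonneg fun c _ => sum_nonneg fun a _ => ite_nonneg (hm x c a) le_rfl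

theorem bias_wIPS (pX : X → ℝ) (pC : X → C → ℝ) (π π₀ : X → A → ℝ) (q : A → C → X → ℝ) :
    bias pX pC π π₀ q (fun x _ a => wIPS π π₀ a x) =
      -∑ x, ∑ c, ∑ a, if π₀ x a = 0 then pX x * pC x c * π x a * q a c x else 0 := by
  simp only [bias, mu, V, wIPS, ← sum_sub_distrib, ← sum_neg_distrib]
  refine sum_congr rfl fun x _ => sum_congr rfl fun c _ => sum_congr rfl fun a _ => ?_
  split_ifs with h
  · simp [h]
  · field_simp
    ring

theorem bias_wCHIPS {pX : X → ℝ} {pC : X → C → ℝ} (hpX : ∀ x, 0 ≤ pX x)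
    (hpC : ∀ x c, 0 ≤ pC x c) (π π₀ : X → A → ℝ) {q : A → C → X → ℝ} {qbar : A → C → ℝ}
    (hq : ∀ a c x, q a c x = qbar a c) :
    bias pX pC π π₀ q (fun _ c a => wCHIPS pX pC π π₀ a c) =
      -∑ x, ∑ c, ∑ a,
        if pac pX pC π₀ c a = 0 then pX x * pC x c * π x a * q a c x else 0 := by
  simp only [bias, mu, V, wCHIPS, sum_comm₃ (X := X), ← sum_sub_distrib, ← sum_neg_distrib, hq]
  refine sum_congr rfl fun c _ => sum_congr rfl fun a _ => ?_
  rw [sum_sub_distrib, sum_neg_distrib, sum_ite_irrel, sum_const_zero, ← sum_mul, ← sum_mul,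
    ← sum_mul, ← pc_mul_pac hpX hpC, ← pc_mul_pac hpX hpC]
  split_ifs with h
  · simp [h]
  · field_simp
    ring

theorem sum_ite_sub_sum_ite_pac_eq_zero {pX : X → ℝ} {pC : X → C → ℝ} (hpX : ∀ x, 0 ≤ pX x)
    (hpC : ∀ x c, 0 ≤ pC x c) {π₀ : X → A → ℝ} (hπ₀ : ∀ x a, 0 ≤ π₀ x a) (π : X → A → ℝ)
    (q : A → C → X → ℝ) :
    (∑ x, ∑ c, ∑ a, if π₀ x a = 0 then pX x * pC x c * π x a * q a c x else 0) -
        (∑ x, ∑ c, ∑ a,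
          if pac pX pC π₀ c a = 0 then pX x * pC x c * π x a * q a c x else 0) =
      ∑ x, ∑ c, ∑ a, if π₀ x a = 0 ∧ 0 < pac pX pC π₀ c a
        then pX x * pC x c * π x a * q a c x else 0 := by
  simp only [← sum_sub_distrib]
  refine sum_congr rfl fun x _ => sum_congr rfl fun c _ => sum_congr rfl fun a _ => ?_
  have hpac := pac_nonneg hpX hpC hπ₀ c a
  by_cases h0 : π₀ x a = 0 <;> by_cases hP : pac pX pC π₀ c a = 0
  · simp [h0, hP]
  · simp [h0, hP, hpac.lt_of_ne' hP]
  · have hx : pX x * pC x c = 0 :=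
      (mul_eq_zero.mp (mul_eq_zero_of_pac_eq_zero hpX hpC hπ₀ hP x)).resolve_right h0
    simp [h0, hP, hx]
  · simp [h0, hP]

end

theorem cor1_bias_reduction_general
    (pX : X → ℝ) (pC : X → C → ℝ) (π π₀ : X → A → ℝ)
    (q : A → C → X → ℝ) (qbar : A → C → ℝ)
    (hpX0 : ∀ x, 0 ≤ pX x) (hpC0 : ∀ x c, 0 ≤ pC x c)
    (hπ : ∀ x a, 0 ≤ π x a) (hπ₀ : ∀ x a, 0 ≤ π₀ x a)
    (hA3 : ∀ (a : A) (c : C) (x : X), q a c x = qbar a c)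
    (hqbar : ∀ a c, 0 ≤ qbar a c) :
    (|bias pX pC π π₀ q (fun x c a => wIPS π π₀ a x)|
      - |bias pX pC π π₀ q (fun x c a => wCHIPS pX pC π π₀ a c)|
      = ∑ c, pc pX pC c * ∑ x, pxc pX pC x c * ∑ a,
          if π₀ x a = 0 ∧ 0 < pac pX pC π₀ c a then π x a * qbar a c else 0) ∧
    (0 ≤ ∑ c, pc pX pC c * ∑ x, pxc pX pC x c * ∑ a,
          if π₀ x a = 0 ∧ 0 < pac pX pC π₀ c a then π x a * qbar a c else 0) := by
  have hmass : ∀ x c a, 0 ≤ pX x * pC x c * π x a * q a c x := fun x c a => by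
    rw [hA3]
    exact mul_nonneg (mul_nonneg (mul_nonneg (hpX0 x) (hpC0 x c)) (hπ x a)) (hqbar a c)
  have hRHS : (∑ c, pc pX pC c * ∑ x, pxc pX pC x c * ∑ a,
        if π₀ x a = 0 ∧ 0 < pac pX pC π₀ c a then π x a * qbar a c else 0) =
      ∑ x, ∑ c, ∑ a, if π₀ x a = 0 ∧ 0 < pac pX pC π₀ c a
        then pX x * pC x c * π x a * q a c x else 0 := by
    rw [sum_pc_mul_sum_pxc_mul hpX0 hpC0]
    simp only [mul_sum, mul_ite, mul_zero, hA3, mul_assoc]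
  rw [hRHS, bias_wIPS, bias_wCHIPS hpX0 hpC0 π π₀ hA3, abs_neg, abs_neg,
    abs_of_nonneg (sum_sum_sum_ite_nonneg hmass _), abs_of_nonneg (sum_sum_sum_ite_nonneg hmass _)]
  exact ⟨sum_ite_sub_sum_ite_pac_eq_zero hpX0 hpC0 hπ₀ π q, sum_sum_sum_ite_nonneg hmass _⟩

/-- Corollary 1 (bias reduction of CHIPS over IPS). -/
theorem cor1_bias_reduction
    (pX : X → ℝ) (pC : X → C → ℝ) (π π₀ : X → A → ℝ)
    (q : A → C → X → ℝ) (qbar : A → C → ℝ)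
    (hpX0 : ∀ x, 0 ≤ pX x) (hpX1 : ∑ x, pX x = 1)
    (hpC0 : ∀ x c, 0 ≤ pC x c) (hpC1 : ∀ x, ∑ c, pC x c = 1)
    (hπ : ∀ x a, 0 ≤ π x a) (hπ1 : ∀ x, ∑ a, π x a = 1)
    (hπ₀ : ∀ x a, 0 ≤ π₀ x a) (hπ₀1 : ∀ x, ∑ a, π₀ x a = 1)
    (hA3 : ∀ (a : A) (c : C) (x : X), q a c x = qbar a c)
    (hqbar : ∀ a c, 0 ≤ qbar a c) :
    (|bias pX pC π π₀ q (fun x c a => wIPS π π₀ a x)|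
      - |bias pX pC π π₀ q (fun x c a => wCHIPS pX pC π π₀ a c)|
      = ∑ c, pc pX pC c * ∑ x, pxc pX pC x c * ∑ a,
          if π₀ x a = 0 ∧ 0 < pac pX pC π₀ c a then π x a * qbar a c else 0) ∧
    (0 ≤ ∑ c, pc pX pC c * ∑ x, pxc pX pC x c * ∑ a,
          if π₀ x a = 0 ∧ 0 < pac pX pC π₀ c a then π x a * qbar a c else 0) :=
  cor1_bias_reduction_general pX pC π π₀ q qbar hpX0 hpC0 hπ hπ₀ hA3 hqbar

end

end OPE
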